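/- arXiv:1708.05783 — 2 statements merged into one kernel-verified Lean document; each statement's English description precedes it below -/
import Mathlib

section
/- Let n ≥ 2 be a natural number and let L, μ, κ be real numbers with L ≠ 1, μ = 2(n-1)L/(1-L), κ = μ(1 - L(n+1)), and suppose (1-2n)κμ - nμ² + 2(n-1)(κ+μ) = 0 and μ ≠ 0. Then either (L = 1/(n+1), μ = (2n-2)/n, κ = 0) or (L = 1/n, μ = 2, κ = -2/n). -/
/-! Multiplying the pseudosymmetry equation by `1 - L` and eliminating `κ` and `μ (1 - L)`
turns it into `4 (n - 1) μ (n L - 1) ((n + 1) L - 1) = 0`. Since `μ ≠ 0` and `n ≠ 1`, `L` is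
`1 / n` or `1 / (n + 1)`, and `μ`, `κ` are then read off from their defining formulas. -/

theorem kappaMu_residual_mul_one_sub {R : Type*} [CommRing R] {N L μ κ : R}
    (hμ : μ * (1 - L) = 2 * (N - 1) * L) (hκ : κ = μ * (1 - L * (N + 1))) :
    ((1 - 2 * N) * κ * μ - N * μ ^ 2 + 2 * (N - 1) * (κ + μ)) * (1 - L) =
      4 * (N - 1) * μ * ((N * L - 1) * ((N + 1) * L - 1)) := by
  subst hκ
  linear_combination ((1 - 2 * N) * (1 - L * (N + 1)) - N) * μ * hμ

theorem kappaMu_mul_eq_one_or {K : Type*} [Field K] [CharZero K] {N L μ κ : K}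
    (hN : N ≠ 1) (hμ : μ * (1 - L) = 2 * (N - 1) * L)
    (hκ : κ = μ * (1 - L * (N + 1)))
    (heq : (1 - 2 * N) * κ * μ - N * μ ^ 2 + 2 * (N - 1) * (κ + μ) = 0) (hμ0 : μ ≠ 0) :
    N * L = 1 ∨ (N + 1) * L = 1 := by
  have hfactor := kappaMu_residual_mul_one_sub hμ hκ
  rw [heq, zero_mul, eq_comm] at hfactor
  have h4N : (4 : K) * (N - 1) ≠ 0 := mul_ne_zero (by norm_num) (sub_ne_zero.mpr hN)
  rcases mul_eq_zero.mp ((mul_eq_zero.mp hfactor).resolve_left (mul_ne_zero h4N hμ0)) with h | h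
  · exact Or.inl (sub_eq_zero.mp h)
  · exact Or.inr (sub_eq_zero.mp h)

theorem kappaMu_classification {K : Type*} [Field K] [CharZero K] {N L μ κ : K}
    (hN : N ≠ 1) (hL : L ≠ 1) (hμ : μ = 2 * (N - 1) * L / (1 - L))
    (hκ : κ = μ * (1 - L * (N + 1)))
    (heq : (1 - 2 * N) * κ * μ - N * μ ^ 2 + 2 * (N - 1) * (κ + μ) = 0) (hμ0 : μ ≠ 0) :
    (L = 1 / (N + 1) ∧ μ = (2 * N - 2) / N ∧ κ = 0) ∨ (L = 1 / N ∧ μ = 2 ∧ κ = -2 / N) := by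
  have hμ' : μ * (1 - L) = 2 * (N - 1) * L := by
    rw [hμ, div_mul_cancel₀ _ (sub_ne_zero.mpr hL.symm)]
  rcases kappaMu_mul_eq_one_or hN hμ' hκ heq hμ0 with h | h
  · have hN0 : N ≠ 0 := left_ne_zero_of_mul_eq_one h
    obtain rfl : L = 1 / N := eq_one_div_of_mul_eq_one_right h
    have hμ2 : μ = 2 := by
      have hN1 : N - 1 ≠ 0 := sub_ne_zero.mpr hN
      field_simp at hμ'
      exact hμ'
    refine Or.inr ⟨rfl, hμ2, ?_⟩
    rw [hκ, hμ2]; field_simp; ring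
  · have hN1 : N + 1 ≠ 0 := left_ne_zero_of_mul_eq_one h
    obtain rfl : L = 1 / (N + 1) := eq_one_div_of_mul_eq_one_right h
    have hN0 : N ≠ 0 := by rintro rfl; norm_num at hL
    refine Or.inl ⟨rfl, ?_, by rw [hκ]; field_simp; ring⟩
    field_simp at hμ' ⊢
    linear_combination hμ'

theorem stmt_2 (n : ℕ) (hn : 2 ≤ n) (L μ κ : ℝ) (hL : L ≠ 1)
    (hμ : μ = 2*((n:ℝ)-1)*L/(1-L)) (hκ : κ = μ*(1 - L*((n:ℝ)+1)))
    (heq : (1-2*(n:ℝ))*κ*μ - (n:ℝ)*μ^2 + 2*((n:ℝ)-1)*(κ+μ) = 0)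
    (hμ0 : μ ≠ 0) :
    (L = 1/((n:ℝ)+1) ∧ μ = (2*(n:ℝ)-2)/(n:ℝ) ∧ κ = 0) ∨
    (L = 1/(n:ℝ) ∧ μ = 2 ∧ κ = -2/(n:ℝ)) := by
  have hn1 : (n : ℝ) ≠ 1 := by exact_mod_cast (show n ≠ 1 by omega)
  exact kappaMu_classification hn1 hL hμ hκ heq hμ0
end

section
/- Let κ, μ, λ be real numbers with κ = 1 - λ², μ = 2(λ-1), and (1-2n)κμ - nμ² + 2(n-1)(κ+μ) = 0 for a natural number n ≥ 2, with λ ≠ 1. Then λ = n/(2n-1). -/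
/-! Substituting `κ = 1 - λ²` and `μ = 2(λ - 1)` turns the pseudosymmetry condition into
`2(λ - 1)² ((2n - 1)λ - n) = 0`; since `λ ≠ 1` the linear factor vanishes. -/

lemma pseudosymmetry_poly_factor (n l : ℝ) :
    (1 - 2*n) * (1 - l^2) * (2*(l-1)) - n * (2*(l-1))^2 + 2*(n-1) * ((1 - l^2) + 2*(l-1))
      = 2 * (l - 1)^2 * ((2*n - 1) * l - n) := by
  ring

lemma two_mul_natCast_sub_one_ne_zero (n : ℕ) : 2 * (n : ℝ) - 1 ≠ 0 := by
  rw [sub_ne_zero]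
  exact_mod_cast (by omega : 2 * n ≠ 1)

theorem stmt_6_general (n : ℕ) (κ μ l : ℝ)
    (hκ : κ = 1 - l^2) (hμ : μ = 2*(l-1))
    (heq : (1-2*(n:ℝ))*κ*μ - (n:ℝ)*μ^2 + 2*((n:ℝ)-1)*(κ+μ) = 0)
    (hl : l ≠ 1) : l = (n:ℝ)/(2*(n:ℝ)-1) := by
  subst hκ hμ
  rw [pseudosymmetry_poly_factor] at heq
  have hlinear : (2*(n:ℝ) - 1) * l - n = 0 := by
    simpa [sub_ne_zero.mpr hl] using heq
  rw [eq_div_iff (two_mul_natCast_sub_one_ne_zero n)]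
  linear_combination hlinear

theorem stmt_6 (n : ℕ) (hn : 2 ≤ n) (κ μ l : ℝ)
    (hκ : κ = 1 - l^2) (hμ : μ = 2*(l-1))
    (heq : (1-2*(n:ℝ))*κ*μ - (n:ℝ)*μ^2 + 2*((n:ℝ)-1)*(κ+μ) = 0)
    (hl : l ≠ 1) : l = (n:ℝ)/(2*(n:ℝ)-1) :=
  stmt_6_general n κ μ l hκ hμ heq hl
end
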